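/- Let (A,B) be nonnegative random variables admitting a (ρ,H)-local dependence measure g with λ* < ∞, and let X be a nonnegative random variable independent of (A,B) solving X =_d AX+B. Then limsup_{ε→0+} (-log P(X < ε))/H(ε) < ∞. -/

import Mathlib

open MeasureTheory ProbabilityTheory Filter Set Topology
open scoped ENNReal

/-- `-log p`, valued in `[0,∞]`, with the convention `-log 0 = ∞`. -/
noncomputable def negLog (p : ℝ≥0∞) : ℝ≥0∞ :=
  if p = 0 then ⊤ else ENNReal.ofReal (-Real.log p.toReal)

/-- `H` is positive, continuous and strictly decreasing on `(0,∞)`, and regularly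
varying at `0` with index `-ρ < 0`. -/
structure IsRVatZero (H : ℝ → ℝ) (ρ : ℝ) : Prop where
  rho_pos : 0 < ρ
  pos : ∀ x ∈ Set.Ioi (0:ℝ), 0 < H x
  contOn : ContinuousOn H (Set.Ioi 0)
  anti : StrictAntiOn H (Set.Ioi 0)
  rv : ∀ y ∈ Set.Ioi (0:ℝ),
    Filter.Tendsto (fun x => H (y * x) / H x) (nhdsWithin 0 (Set.Ioi 0)) (nhds (y ^ (-ρ)))

/-- `X` is an `IED^ρ_H(l)`-random variable with respect to `μ`:
`lim_{ε→0⁺} (-log P(X < ε))/H(ε) = l`. -/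
def IsIED {Ω : Type*} [MeasurableSpace Ω] (μ : Measure Ω) (X : Ω → ℝ)
    (H : ℝ → ℝ) (l : ℝ≥0∞) : Prop :=
  Filter.Tendsto (fun ε => negLog (μ {ω | X ω < ε}) / ENNReal.ofReal (H ε))
    (nhdsWithin 0 (Set.Ioi 0)) (nhds l)

/-- `g` is the `(ρ,H)`-local dependence measure of the pair `(A,B)`:
`g(y) = lim_{ε→0⁺} (-log P(εAy + B < ε))/H(ε)` for every `y ≥ 0`. -/
def IsLDM {Ω : Type*} [MeasurableSpace Ω] (μ : Measure Ω) (A B : Ω → ℝ)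
    (H : ℝ → ℝ) (g : ℝ → ℝ≥0∞) : Prop :=
  ∀ y : ℝ, 0 ≤ y →
    Filter.Tendsto (fun ε => negLog (μ {ω | ε * A ω * y + B ω < ε}) / ENNReal.ofReal (H ε))
      (nhdsWithin 0 (Set.Ioi 0)) (nhds (g y))

/-- The Legendre-type transform `φ_ρ(λ) = inf_{y>0} { g(y) + λ/y^ρ }`. -/
noncomputable def phi (g : ℝ → ℝ≥0∞) (ρ : ℝ) (l : ℝ≥0∞) : ℝ≥0∞ :=
  ⨅ y ∈ Set.Ioi (0:ℝ), (g y + l / ENNReal.ofReal (y ^ ρ))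

/-- `λ* = inf_{y>1} { (y^ρ/(y^ρ-1)) g(y) }`. -/
noncomputable def lambdaStar (g : ℝ → ℝ≥0∞) (ρ : ℝ) : ℝ≥0∞ :=
  ⨅ y ∈ Set.Ioi (1:ℝ), ENNReal.ofReal (y ^ ρ / (y ^ ρ - 1)) * g y

lemma negLog_ne_top {p : ℝ≥0∞} (hp : p ≠ 0) : negLog p ≠ ⊤ := by
  simp [negLog, hp]

lemma ne_zero_of_negLog_ne_top {p : ℝ≥0∞} (hp : negLog p ≠ ⊤) : p ≠ 0 := by
  intro h; subst h; simp [negLog] at hp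

lemma negLog_anti {p q : ℝ≥0∞} (hq : q ≠ ⊤) (h : p ≤ q) : negLog q ≤ negLog p := by
  rcases eq_or_ne p 0 with rfl | h0
  · simp [negLog]
  have hq0 : q ≠ 0 := by rintro rfl; exact h0 (le_zero_iff.mp h)
  have hpt : p ≠ ⊤ := ne_top_of_le_ne_top hq h
  simp only [negLog, if_neg h0, if_neg hq0]
  apply ENNReal.ofReal_le_ofReal
  have hle : p.toReal ≤ q.toReal := (ENNReal.toReal_le_toReal hpt hq).mpr h
  exact neg_le_neg (Real.log_le_log (ENNReal.toReal_pos h0 hpt) hle)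

lemma negLog_mul_le {p q : ℝ≥0∞} (hp : p ≤ 1) (hq : q ≤ 1) :
    negLog (p * q) ≤ negLog p + negLog q := by
  rcases eq_or_ne p 0 with rfl | hp0
  · simp [negLog]
  rcases eq_or_ne q 0 with rfl | hq0
  · simp [negLog]
  have hpq : p * q ≠ 0 := mul_ne_zero hp0 hq0
  have hpt : p ≠ ⊤ := ne_top_of_le_ne_top ENNReal.one_ne_top hp
  have hqt : q ≠ ⊤ := ne_top_of_le_ne_top ENNReal.one_ne_top hq
  have hp1 : p.toReal ≤ 1 := by simpa using ENNReal.toReal_mono ENNReal.one_ne_top hp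
  have hq1 : q.toReal ≤ 1 := by simpa using ENNReal.toReal_mono ENNReal.one_ne_top hq
  have hnp : 0 ≤ -Real.log p.toReal :=
    neg_nonneg.mpr (Real.log_nonpos ENNReal.toReal_nonneg hp1)
  have hnq : 0 ≤ -Real.log q.toReal :=
    neg_nonneg.mpr (Real.log_nonpos ENNReal.toReal_nonneg hq1)
  simp only [negLog, if_neg hp0, if_neg hq0, if_neg hpq]
  rw [ENNReal.toReal_mul,
    Real.log_mul (ENNReal.toReal_ne_zero.mpr ⟨hp0, hpt⟩) (ENNReal.toReal_ne_zero.mpr ⟨hq0, hqt⟩),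
    neg_add, ENNReal.ofReal_add hnp hnq]

lemma stmt11_core (Pr Q : ℝ → ℝ≥0∞) (H : ℝ → ℝ) (y θ : ℝ) (L : ℝ≥0∞)
    (hy1 : 1 < y) (hθ0 : 0 < θ) (hθ1 : θ < 1)
    (ε0 : ℝ) (hε0 : 0 < ε0)
    (hHpos : ∀ ε : ℝ, 0 < ε → 0 < H ε)
    (hHanti : ∀ ε : ℝ, 0 < ε → ε ≤ ε0 → H ε0 ≤ H ε)
    (hHstep : ∀ ε : ℝ, 0 < ε → ε ≤ ε0 → H (y * ε) ≤ θ * H ε)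
    (hQb : ∀ ε : ℝ, 0 < ε → ε ≤ ε0 → negLog (Q ε) ≤ L * ENNReal.ofReal (H ε))
    (hPrMono : ∀ s t : ℝ, s ≤ t → Pr s ≤ Pr t)
    (hPr1 : ∀ t : ℝ, Pr t ≤ 1)
    (hrec : ∀ ε : ℝ, 0 < ε → negLog (Pr ε) ≤ negLog (Pr (y * ε)) + negLog (Q ε)) :
    ∀ ε : ℝ, 0 < ε → ε ≤ ε0 →
      negLog (Pr ε) / ENNReal.ofReal (H ε) ≤
        negLog (Pr ε0) / ENNReal.ofReal (H ε0) + L * ENNReal.ofReal ((1 - θ)⁻¹) := by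
  have hy0 : (0:ℝ) < y := lt_trans one_pos hy1
  -- iterated regular-variation bound
  have hyp : ∀ k : ℕ, ∀ ε : ℝ, 0 < ε → y ^ k * ε ≤ ε0 →
      H (y ^ (k+1) * ε) ≤ θ ^ (k+1) * H ε := by
    intro k
    induction k with
    | zero =>
      intro ε hε h1
      simpa using hHstep ε hε (by simpa using h1)
    | succ k ih =>
      intro ε hε h1
      have hyk : (0:ℝ) < y ^ (k+1) * ε := mul_pos (pow_pos hy0 _) hε
      have hykk : y ^ k * ε ≤ y ^ (k+1) * ε := by
        have : y ^ k ≤ y ^ (k+1) := pow_le_pow_right₀ hy1.le (Nat.le_succ k)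
        nlinarith
      have h2 : y ^ k * ε ≤ ε0 := le_trans hykk h1
      have hst := hHstep (y ^ (k+1) * ε) hyk h1
      calc H (y ^ (k+1+1) * ε) = H (y * (y ^ (k+1) * ε)) := by ring_nf
        _ ≤ θ * H (y ^ (k+1) * ε) := hst
        _ ≤ θ * (θ ^ (k+1) * H ε) := mul_le_mul_of_nonneg_left (ih ε hε h2) hθ0.le
        _ = θ ^ (k+1+1) * H ε := by ring
  -- iterated recursion
  have hChain : ∀ n : ℕ, ∀ ε : ℝ, 0 < ε → y ^ n * ε ≤ ε0 →
      negLog (Pr ε) ≤ negLog (Pr (y ^ (n+1) * ε)) +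
        L * ENNReal.ofReal ((∑ k ∈ Finset.range (n+1), θ ^ k) * H ε) := by
    intro n
    induction n with
    | zero =>
      intro ε hε h1
      have h1' : ε ≤ ε0 := by simpa using h1
      have hq := hQb ε hε h1'
      have hsum1 : (∑ k ∈ Finset.range (0+1), θ ^ k) = 1 := by simp
      rw [pow_one, hsum1, one_mul]
      exact le_trans (hrec ε hε) (add_le_add_right hq _)
    | succ n ih =>
      intro ε hε h1
      have hε' : (0:ℝ) < y ^ (n+1) * ε := mul_pos (pow_pos hy0 _) hε
      have h2 : y ^ n * ε ≤ ε0 := by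
        have : y ^ n ≤ y ^ (n+1) := pow_le_pow_right₀ hy1.le (Nat.le_succ n)
        nlinarith
      have hC := ih ε hε h2
      have hst := hrec (y ^ (n+1) * ε) hε'
      have hq := hQb (y ^ (n+1) * ε) hε' h1
      have hHb := hyp n ε hε h2
      have hθn : (0:ℝ) ≤ θ ^ (n+1) * H ε := mul_nonneg (pow_nonneg hθ0.le _) (hHpos ε hε).le
      have hSn : (0:ℝ) ≤ (∑ k ∈ Finset.range (n+1), θ ^ k) * H ε := by
        have : (0:ℝ) ≤ ∑ k ∈ Finset.range (n+1), θ ^ k :=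
          Finset.sum_nonneg fun k _ => pow_nonneg hθ0.le _
        exact mul_nonneg this (hHpos ε hε).le
      have hq2 : negLog (Q (y ^ (n+1) * ε)) ≤ L * ENNReal.ofReal (θ ^ (n+1) * H ε) :=
        le_trans hq (mul_le_mul_right (ENNReal.ofReal_le_ofReal hHb) L)
      have hkey : θ ^ (n+1) * H ε + (∑ k ∈ Finset.range (n+1), θ ^ k) * H ε
          = (∑ k ∈ Finset.range (n+1+1), θ ^ k) * H ε := by
        rw [Finset.sum_range_succ (fun k => θ ^ k) (n+1)]; ring
      calc negLog (Pr ε)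
          ≤ negLog (Pr (y ^ (n+1) * ε)) + L * ENNReal.ofReal ((∑ k ∈ Finset.range (n+1), θ ^ k) * H ε) := hC
        _ ≤ (negLog (Pr (y * (y ^ (n+1) * ε))) + negLog (Q (y ^ (n+1) * ε)))
              + L * ENNReal.ofReal ((∑ k ∈ Finset.range (n+1), θ ^ k) * H ε) := add_le_add_left hst _
        _ ≤ (negLog (Pr (y * (y ^ (n+1) * ε))) + L * ENNReal.ofReal (θ ^ (n+1) * H ε))
              + L * ENNReal.ofReal ((∑ k ∈ Finset.range (n+1), θ ^ k) * H ε) :=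
            add_le_add_left (add_le_add_right hq2 _) _
        _ = negLog (Pr (y ^ (n+1+1) * ε)) +
              L * ENNReal.ofReal ((∑ k ∈ Finset.range (n+1+1), θ ^ k) * H ε) := by
            rw [show y * (y ^ (n+1) * ε) = y ^ (n+1+1) * ε by ring, add_assoc,
              ← mul_add, ← ENNReal.ofReal_add hθn hSn, hkey]
  -- geometric sum bound
  have hsum : ∀ n : ℕ, (∑ k ∈ Finset.range n, θ ^ k) ≤ (1 - θ)⁻¹ := by
    intro n
    have h1θ : (0:ℝ) < 1 - θ := by linarith
    rw [geom_sum_eq hθ1.ne n]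
    have heq : (θ ^ n - 1) / (θ - 1) = (1 - θ ^ n) / (1 - θ) := by
      rw [show θ ^ n - 1 = -(1 - θ ^ n) by ring, show θ - 1 = -(1 - θ) by ring, neg_div_neg_eq]
    have hnum : (1 - θ ^ n) ≤ 1 := by nlinarith [pow_nonneg hθ0.le n]
    rw [heq, ← one_div]
    gcongr
  -- conclusion
  intro ε hε hεle
  have hεn : ∃ n : ℕ, ε0 < y ^ n * ε := by
    obtain ⟨n, hn⟩ := pow_unbounded_of_one_lt (ε0 / ε) hy1
    exact ⟨n, by rwa [div_lt_iff₀ hε] at hn⟩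
  have hN0 : Nat.find hεn ≠ 0 := by
    intro h
    have := Nat.find_spec hεn
    rw [h] at this
    simp only [pow_zero, one_mul] at this
    linarith
  obtain ⟨m, hm⟩ := Nat.exists_eq_succ_of_ne_zero hN0
  have hNs : ε0 < y ^ (m+1) * ε := by
    have := Nat.find_spec hεn
    rwa [hm] at this
  have hmin : y ^ m * ε ≤ ε0 := by
    have := Nat.find_min hεn (by omega : m < Nat.find hεn)
    linarith [not_lt.mp this]
  have hC := hChain m ε hε hmin
  have hPrtop : negLog (Pr (y ^ (m+1) * ε)) ≤ negLog (Pr ε0) :=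
    negLog_anti (ne_top_of_le_ne_top ENNReal.one_ne_top (hPr1 _)) (hPrMono _ _ hNs.le)
  have hHε := hHpos ε hε
  have hb2 : L * ENNReal.ofReal ((∑ k ∈ Finset.range (m+1), θ ^ k) * H ε)
      ≤ L * ENNReal.ofReal ((1 - θ)⁻¹ * H ε) :=
    mul_le_mul_right (ENNReal.ofReal_le_ofReal (mul_le_mul_of_nonneg_right (hsum (m+1)) hHε.le)) L
  have hfinal : negLog (Pr ε) ≤ negLog (Pr ε0) + L * ENNReal.ofReal ((1 - θ)⁻¹ * H ε) :=
    le_trans hC (add_le_add hPrtop hb2)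
  have hD0 : ENNReal.ofReal (H ε) ≠ 0 := (ENNReal.ofReal_pos.mpr hHε).ne'
  have hDt : ENNReal.ofReal (H ε) ≠ ⊤ := ENNReal.ofReal_ne_top
  have h1θ : (0:ℝ) ≤ (1 - θ)⁻¹ := by
    have : (0:ℝ) < 1 - θ := by linarith
    positivity
  calc negLog (Pr ε) / ENNReal.ofReal (H ε)
      ≤ (negLog (Pr ε0) + L * ENNReal.ofReal ((1 - θ)⁻¹ * H ε)) / ENNReal.ofReal (H ε) :=
        ENNReal.div_le_div_right hfinal _
    _ = negLog (Pr ε0) / ENNReal.ofReal (H ε) +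
          L * ENNReal.ofReal ((1 - θ)⁻¹ * H ε) / ENNReal.ofReal (H ε) := ENNReal.add_div
    _ ≤ negLog (Pr ε0) / ENNReal.ofReal (H ε0) + L * ENNReal.ofReal ((1 - θ)⁻¹) := by
        apply add_le_add
        · exact ENNReal.div_le_div_left
            (ENNReal.ofReal_le_ofReal (hHanti ε hε hεle)) _
        · rw [ENNReal.ofReal_mul h1θ, ← mul_assoc,
            mul_div_assoc, ENNReal.div_self hD0 hDt, mul_one]

/-- Lemma `lem:limsup2`.
If `(A,B)` has `(ρ,H)`-LDM `g` with `λ* < ∞` and `X` is a nonnegative random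
variable, independent of `(A,B)`, solving `X =_d AX + B`, then
`limsup_{ε→0⁺} (-log P(X < ε))/H(ε) < ∞`. -/
theorem stmt11 {Ω : Type*} [MeasurableSpace Ω] (μ : Measure Ω) [IsProbabilityMeasure μ]
    (H : ℝ → ℝ) (ρ : ℝ) (hH : IsRVatZero H ρ)
    (A B X : Ω → ℝ) (hA : Measurable A) (hB : Measurable B) (hX : Measurable X)
    (hA0 : ∀ᵐ ω ∂μ, 0 ≤ A ω) (hB0 : ∀ᵐ ω ∂μ, 0 ≤ B ω) (hX0 : ∀ᵐ ω ∂μ, 0 ≤ X ω)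
    (g : ℝ → ℝ≥0∞) (hg : IsLDM μ A B H g)
    (hls : lambdaStar g ρ ≠ ⊤)
    (hindep : IndepFun X (fun ω => (A ω, B ω)) μ)
    (hfix : μ.map X = μ.map (fun ω => A ω * X ω + B ω)) :
    Filter.limsup (fun ε => negLog (μ {ω | X ω < ε}) / ENNReal.ofReal (H ε))
        (nhdsWithin 0 (Set.Ioi 0)) < ⊤ := by
  classical
  have hρ := hH.rho_pos
  -- Step 1: find y > 1 with g y ≠ ⊤
  obtain ⟨y, hy1, hgy⟩ : ∃ y : ℝ, 1 < y ∧ g y ≠ ⊤ := by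
    by_contra hcon
    push_neg at hcon
    apply hls
    rw [lambdaStar, iInf_eq_top]
    intro y
    rw [iInf_eq_top]
    intro hy
    have hy1 : (1:ℝ) < y := hy
    have h1 : (1:ℝ) < y ^ ρ :=
      (Real.one_lt_rpow_iff_of_pos (by linarith)).mpr (Or.inl ⟨hy1, hρ⟩)
    have hc0 : (0:ℝ) < y ^ ρ / (y ^ ρ - 1) := div_pos (by linarith) (by linarith)
    rw [hcon y hy1, ENNReal.mul_top (ENNReal.ofReal_pos.mpr hc0).ne']
  have hy0 : (0:ℝ) < y := lt_trans one_pos hy1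
  -- constants
  set L : ℝ≥0∞ := g y + 1 with hLdef
  have hLt : L ≠ ⊤ := ENNReal.add_ne_top.mpr ⟨hgy, ENNReal.one_ne_top⟩
  have hgyL : g y < L := ENNReal.lt_add_right hgy one_ne_zero
  set θ : ℝ := (y ^ (-ρ) + 1) / 2 with hθdef
  have hyρ1 : y ^ (-ρ) < 1 := Real.rpow_lt_one_of_one_lt_of_neg hy1 (neg_neg_of_pos hρ)
  have hyρ0 : (0:ℝ) < y ^ (-ρ) := Real.rpow_pos_of_pos hy0 _
  have hθ1 : θ < 1 := by rw [hθdef]; linarith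
  have hθ0 : 0 < θ := by rw [hθdef]; linarith
  have hθgt : y ^ (-ρ) < θ := by rw [hθdef]; linarith
  -- eventual bounds
  have hQev : ∀ᶠ ε in nhdsWithin (0:ℝ) (Set.Ioi 0),
      negLog (μ {ω | ε * A ω * y + B ω < ε}) / ENNReal.ofReal (H ε) < L :=
    (hg y hy0.le).eventually_lt_const hgyL
  have hRev : ∀ᶠ ε in nhdsWithin (0:ℝ) (Set.Ioi 0), H (y * ε) / H ε < θ :=
    (hH.rv y (mem_Ioi.mpr hy0)).eventually_lt_const hθgt
  obtain ⟨ε0, hε0mem, hε0sub⟩ :=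
    mem_nhdsGT_iff_exists_Ioc_subset.mp (hQev.and hRev)
  have hε0pos : (0:ℝ) < ε0 := hε0mem
  have hHpos : ∀ ε : ℝ, 0 < ε → 0 < H ε := fun ε hε => hH.pos ε (mem_Ioi.mpr hε)
  have hHanti : ∀ ε : ℝ, 0 < ε → ε ≤ ε0 → H ε0 ≤ H ε := by
    intro ε hε hle
    rcases eq_or_lt_of_le hle with rfl | hlt
    · exact le_refl _
    · exact (hH.anti (mem_Ioi.mpr hε) (mem_Ioi.mpr hε0pos) hlt).le
  have hHstep : ∀ ε : ℝ, 0 < ε → ε ≤ ε0 → H (y * ε) ≤ θ * H ε := by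
    intro ε hε hle
    have := (hε0sub ⟨hε, hle⟩).2
    exact ((div_lt_iff₀ (hHpos ε hε)).mp this).le
  have hQb : ∀ ε : ℝ, 0 < ε → ε ≤ ε0 →
      negLog (μ {ω | ε * A ω * y + B ω < ε}) ≤ L * ENNReal.ofReal (H ε) := by
    intro ε hε hle
    have h := (hε0sub ⟨hε, hle⟩).1
    exact (ENNReal.div_le_iff (ENNReal.ofReal_pos.mpr (hHpos ε hε)).ne'
      ENNReal.ofReal_ne_top).mp h.le
  have hQpos : ∀ ε : ℝ, 0 < ε → ε ≤ ε0 → μ {ω | ε * A ω * y + B ω < ε} ≠ 0 := by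
    intro ε hε hle
    exact ne_zero_of_negLog_ne_top
      (fun h => (h ▸ hQb ε hε hle).not_gt
        (lt_top_iff_ne_top.mpr (ENNReal.mul_ne_top hLt ENNReal.ofReal_ne_top)) |>.elim)
  -- measurability helpers
  have hTmeas : ∀ ε : ℝ, MeasurableSet {p : ℝ × ℝ | ε * p.1 * y + p.2 < ε} := by
    intro ε
    have hm : Measurable fun p : ℝ × ℝ => ε * p.1 * y + p.2 :=
      ((measurable_fst.const_mul ε).mul_const y).add measurable_snd
    exact measurableSet_lt hm measurable_const
  have hABXm : Measurable fun ω => A ω * X ω + B ω := (hA.mul hX).add hB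
  have key : ∀ t : ℝ, μ {ω | X ω < t} = μ {ω | A ω * X ω + B ω < t} := by
    intro t
    have h1 : μ.map X (Iio t) = μ {ω | X ω < t} := by
      rw [Measure.map_apply hX measurableSet_Iio]; rfl
    have h2 : μ.map (fun ω => A ω * X ω + B ω) (Iio t) = μ {ω | A ω * X ω + B ω < t} := by
      rw [Measure.map_apply hABXm measurableSet_Iio]; rfl
    rw [← h1, hfix, h2]
  have hprodQ : ∀ (t ε : ℝ),
      μ (X ⁻¹' Iio t ∩ (fun ω => (A ω, B ω)) ⁻¹' {p : ℝ × ℝ | ε * p.1 * y + p.2 < ε})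
        = μ {ω | X ω < t} * μ {ω | ε * A ω * y + B ω < ε} := by
    intro t ε
    exact hindep.measure_inter_preimage_eq_mul _ _ measurableSet_Iio (hTmeas ε)
  -- the recursion
  have hrec : ∀ ε : ℝ, 0 < ε →
      negLog (μ {ω | X ω < ε}) ≤ negLog (μ {ω | X ω < y * ε})
        + negLog (μ {ω | ε * A ω * y + B ω < ε}) := by
    intro ε hε
    have hsub : μ {ω | X ω < y * ε} * μ {ω | ε * A ω * y + B ω < ε} ≤ μ {ω | X ω < ε} := by
      rw [key ε, ← hprodQ (y * ε) ε]
      apply measure_mono_ae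
      filter_upwards [hA0] with ω ha
      rintro ⟨h1, h2⟩
      have h1' : X ω < y * ε := h1
      have h2' : ε * A ω * y + B ω < ε := h2
      show A ω * X ω + B ω < ε
      nlinarith [mul_le_mul_of_nonneg_left h1'.le ha]
    refine le_trans (negLog_anti (measure_ne_top μ _) hsub) (negLog_mul_le prob_le_one prob_le_one)
  -- positivity of P(X < ε)
  have hexC : ∃ c : ℝ, μ {ω | X ω < c} ≠ 0 := by
    by_contra hcon
    push_neg at hcon
    have hnull : μ (⋃ n : ℕ, {ω | X ω < (n:ℝ)}) = 0 :=
      measure_iUnion_null fun n => hcon _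
    have huniv : (⋃ n : ℕ, {ω | X ω < (n:ℝ)}) = Set.univ := by
      ext ω
      simp only [mem_iUnion, mem_setOf_eq, mem_univ, iff_true]
      exact exists_nat_gt (X ω)
    rw [huniv, measure_univ] at hnull
    exact one_ne_zero hnull
  have hpos : ∀ ε : ℝ, 0 < ε → μ {ω | X ω < ε} ≠ 0 := by
    obtain ⟨c, hc⟩ := hexC
    set T : Set ℝ := {t | μ {ω | X ω < t} ≠ 0} with hTdef
    have hTne : T.Nonempty := ⟨c, hc⟩
    have hTpos : ∀ t ∈ T, 0 < t := by
      intro t ht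
      by_contra hle
      push_neg at hle
      apply ht
      have h0 : μ {ω | ¬ (0:ℝ) ≤ X ω} = 0 := ae_iff.mp hX0
      refine measure_mono_null ?_ h0
      intro ω hω
      exact fun hge => absurd (lt_of_lt_of_le (lt_of_lt_of_le hω hle) hge) (lt_irrefl _)
    have hTmono : ∀ s t : ℝ, s ∈ T → s ≤ t → t ∈ T := by
      intro s t hs hst
      have hm : μ {ω | X ω < s} ≤ μ {ω | X ω < t} :=
        measure_mono fun ω hω => lt_of_lt_of_le hω hst
      intro h0
      exact hs (le_antisymm (h0 ▸ hm) zero_le)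
    have hqbdd : BddBelow T := ⟨0, fun t ht => (hTpos t ht).le⟩
    set q := sInf T with hqdef
    have hq0 : 0 ≤ q := le_csInf hTne fun t ht => (hTpos t ht).le
    have hq_eq : q = 0 := by
      by_contra hne
      have hqpos : 0 < q := lt_of_le_of_ne hq0 (Ne.symm hne)
      have hyinv1 : y⁻¹ < 1 := inv_lt_one_of_one_lt₀ hy1
      have hyinv0 : 0 < y⁻¹ := inv_pos.mpr hy0
      set ε' := min ε0 (q * (1 - y⁻¹) / 4) with hε'def
      have h1y : (0:ℝ) < 1 - y⁻¹ := by linarith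
      have hε'0 : 0 < ε' := lt_min hε0pos (by positivity)
      have hε'le : ε' ≤ ε0 := min_le_left _ _
      have hε'q : ε' ≤ q * (1 - y⁻¹) / 4 := min_le_right _ _
      have hQ' : μ {ω | ε' * A ω * y + B ω < ε'} ≠ 0 := hQpos ε' hε'0 hε'le
      -- P(X < q + ε') ≠ 0
      obtain ⟨s, hsT, hss⟩ := (csInf_lt_iff hqbdd hTne).mp
        (show sInf T < q + ε' by rw [← hqdef]; linarith)
      have hPq : μ {ω | X ω < q + ε'} ≠ 0 := hTmono s (q + ε') hsT hss.le
      -- combine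
      set t : ℝ := (q + ε') * y⁻¹ + ε' with htdef
      have hmain : μ {ω | X ω < t} ≠ 0 := by
        rw [key t]
        have hge : μ {ω | X ω < q + ε'} * μ {ω | ε' * A ω * y + B ω < ε'}
            ≤ μ {ω | A ω * X ω + B ω < t} := by
          rw [← hprodQ (q + ε') ε']
          apply measure_mono_ae
          filter_upwards [hA0, hB0] with ω ha hb
          rintro ⟨h1, h2⟩
          have h1' : X ω < q + ε' := h1
          have h2' : ε' * A ω * y + B ω < ε' := h2
          show A ω * X ω + B ω < t
          have h6 : 0 ≤ ε' * A ω * y := mul_nonneg (mul_nonneg hε'0.le ha) hy0.le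
          have hB' : B ω < ε' := by linarith
          have hAy : A ω * y < 1 := by
            have h7 : ε' * (A ω * y) < ε' * 1 := by rw [mul_one]; nlinarith
            exact (mul_lt_mul_iff_right₀ hε'0).mp h7
          have hAlt : A ω < y⁻¹ := by
            have := mul_lt_mul_of_pos_right hAy hyinv0
            rwa [one_mul, mul_assoc, mul_inv_cancel₀ hy0.ne', mul_one] at this
          have h3 : A ω * X ω ≤ A ω * (q + ε') := mul_le_mul_of_nonneg_left h1'.le ha
          have h4 : A ω * (q + ε') < y⁻¹ * (q + ε') :=
            mul_lt_mul_of_pos_right hAlt (by positivity)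
          rw [htdef]
          nlinarith
        intro h0
        rw [h0] at hge
        exact (ENNReal.mul_pos hPq hQ').not_ge hge
      have htT : t ∈ T := hmain
      have hqt : q ≤ t := csInf_le hqbdd htT
      have htlt : t < q := by
        have hmul1 : ε' * y⁻¹ ≤ ε' := by nlinarith
        have hmul2 : q * y⁻¹ < q := by nlinarith
        rw [htdef]
        nlinarith
      linarith
    intro ε hε
    obtain ⟨s, hsT, hss⟩ := (csInf_lt_iff hqbdd hTne).mp
      (show sInf T < ε by rw [← hqdef, hq_eq]; exact hε)
    exact hTmono s ε hsT hss.le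
  -- apply the core lemma
  have hPrMono : ∀ s t : ℝ, s ≤ t → μ {ω | X ω < s} ≤ μ {ω | X ω < t} :=
    fun s t hst => measure_mono fun ω hω => lt_of_lt_of_le hω hst
  have hcore := stmt11_core (fun t => μ {ω | X ω < t}) (fun ε => μ {ω | ε * A ω * y + B ω < ε})
    H y θ L hy1 hθ0 hθ1 ε0 hε0pos hHpos hHanti hHstep hQb hPrMono
    (fun t => prob_le_one) hrec
  set K : ℝ≥0∞ := negLog (μ {ω | X ω < ε0}) / ENNReal.ofReal (H ε0)
      + L * ENNReal.ofReal ((1 - θ)⁻¹) with hKdef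
  have hKlt : K < ⊤ := by
    rw [hKdef]
    apply ENNReal.add_lt_top.mpr
    constructor
    · exact ENNReal.div_lt_top (negLog_ne_top (hpos ε0 hε0pos))
        (ENNReal.ofReal_pos.mpr (hHpos ε0 hε0pos)).ne'
    · exact lt_top_iff_ne_top.mpr (ENNReal.mul_ne_top hLt ENNReal.ofReal_ne_top)
  have hevb : ∀ᶠ ε in nhdsWithin (0:ℝ) (Set.Ioi 0),
      negLog (μ {ω | X ω < ε}) / ENNReal.ofReal (H ε) ≤ K := by
    filter_upwards [Ioc_mem_nhdsGT_of_mem (show (0:ℝ) ∈ Ico 0 ε0 from ⟨le_refl _, hε0pos⟩)]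
      with ε hε
    exact hcore ε hε.1 hε.2
  exact lt_of_le_of_lt (Filter.limsup_le_of_le (by isBoundedDefault) hevb) hKlt
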